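/- Let W = (ω_1,…,ω_n) be an integral basis of A with eW′ = MW, and let h = Σ_{i=1}^n (h_i/(de)) ω_i with h_i, d ∈ K[x], gcd(d, e) = 1, gcd(h_1,…,h_n, d) = 1, and d squarefree. If h = (Σ_{i=1}^n (q_i/u) ω_i)′ with u, q_1,…,q_n ∈ K[x] and gcd(q_1,…,q_n, u) = 1, then u is a constant in K. -/

import Mathlib

noncomputable section
open scoped Classical

open Polynomial

/-- Termwise derivative (w.r.t. `x`) of a generalized (Hahn/Puiseux) series in `x - a`:
the exponent-`q` coefficient of `P'` is `(q+1)` times the exponent-`(q+1)` coefficient of `P`. -/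
def hderiv {F : Type} [Field F] (P : HahnSeries ℚ F) : HahnSeries ℚ F where
  coeff q := ((q + 1 : ℚ) : F) * P.coeff (q + 1)
  isPWO_support' := by
    have hsub : (Function.support fun q : ℚ => ((q + 1 : ℚ) : F) * P.coeff (q + 1))
        ⊆ (fun q : ℚ => q - 1) '' P.support := by
      intro q hq
      refine ⟨q + 1, ?_, by ring⟩
      intro h0
      simp [Function.mem_support, h0] at hq
    exact (P.isPWO_support.image_of_monotoneOn
      (fun x _ y _ hxy => by simpa using hxy)).mono hsub

/-- The valuation of a generalized (Hahn/Puiseux) series: the least exponent occurring,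
and `⊤` for the zero series. -/
def hval {F : Type} [Field F] (P : HahnSeries ℚ F) : WithTop ℚ :=
  if h : P = 0 then ⊤
  else ((P.isWF_support.min (HahnSeries.support_nonempty_iff.mpr h) : ℚ) : WithTop ℚ)

/-- A series is ramified if some exponent in its support is not an integer. -/
def Ramified {F : Type} [Field F] (P : HahnSeries ℚ F) : Prop :=
  ∃ q ∈ P.support, ∀ z : ℤ, (z : ℚ) ≠ q

/-- The set of fractional (non-integer) exponents occurring in a series. -/
def fracSupport {F : Type} [Field F] (P : HahnSeries ℚ F) : Set ℚ :=
  {q | q ∈ P.support ∧ ∀ z : ℤ, (z : ℚ) ≠ q}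

/-- The minimal fractional exponent `δ(P)` of a series; `⊤` if `P` is not ramified. -/
def delta {F : Type} [Field F] (P : HahnSeries ℚ F) : WithTop ℚ :=
  if h : (fracSupport P).Nonempty then
    (((P.isWF_support.mono (fun q hq => hq.1)).min h : ℚ) : WithTop ℚ)
  else ⊤

/-- A Hahn series over `ℚ` is a Puiseux series if its exponents have a common denominator. -/
def IsPuiseux {F : Type} [Field F] (P : HahnSeries ℚ F) : Prop :=
  ∃ r : ℕ, 0 < r ∧ ∀ q ∈ P.support, ∃ z : ℤ, (z : ℚ) / r = q

/-! ### The algebraic function field `A = K(x)[y]/⟨m⟩` -/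

/-- The canonical image in `A = K(x)[y]/⟨m⟩` of a polynomial `p ∈ K[x]`. -/
def toA {K : Type} [Field K] (m : Polynomial (RatFunc K)) (p : Polynomial K) :
    AdjoinRoot m :=
  algebraMap (RatFunc K) (AdjoinRoot m) (algebraMap (Polynomial K) (RatFunc K) p)

/-- `D` is the derivation on `A = K(x)[y]/⟨m⟩` extending `d/dx` on `K(x)`:
it is additive, satisfies the Leibniz rule, and restricts to `d/dx` on `K[x]`
(hence, being a derivation on a field, on all of `K(x)`). -/
structure IsDerivationOnA {K : Type} [Field K] (m : Polynomial (RatFunc K))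
    (D : AdjoinRoot m → AdjoinRoot m) : Prop where
  map_add : ∀ f g, D (f + g) = D f + D g
  leibniz : ∀ f g, D (f * g) = f * D g + g * D f
  map_poly : ∀ p : Polynomial K, D (toA m p) = toA m (Polynomial.derivative p)

/-- `W` is a basis of `A` as a vector space over `K(x)`. -/
def IsKxBasis {K : Type} [Field K] {m : Polynomial (RatFunc K)}
    (W : Fin m.natDegree → AdjoinRoot m) : Prop :=
  LinearIndependent (RatFunc K) W ∧ Submodule.span (RatFunc K) (Set.range W) = ⊤

/-- `e W′ = M W` componentwise. -/
def DerivRel {K : Type} [Field K] {m : Polynomial (RatFunc K)}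
    (D : AdjoinRoot m → AdjoinRoot m) (W : Fin m.natDegree → AdjoinRoot m)
    (e : Polynomial K) (M : Matrix (Fin m.natDegree) (Fin m.natDegree) (Polynomial K)) : Prop :=
  ∀ i, toA m e * D (W i) = ∑ j, toA m (M i j) * W j

/-- `gcd(e, m₁₁, …, mₙₙ) = 1`: the only common divisors of `e` and the entries of `M`
are units. -/
def GcdOne {K : Type} [Field K] {n : ℕ}
    (e : Polynomial K) (M : Matrix (Fin n) (Fin n) (Polynomial K)) : Prop :=
  ∀ p : Polynomial K, p ∣ e → (∀ i j, p ∣ M i j) → IsUnit p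

/-! ### Puiseux expansions around a point `a` of the algebraic closure -/

/-- The family of the `n` distinct `K(x)`-embeddings of `A = K(x)[y]/⟨m⟩` into the field of
Puiseux series around a point `a`: each embedding is a ring homomorphism into the Hahn series
field whose values are Puiseux series, sending constants `c ∈ K` to constant series and the
rational function `x` to `a + (x - a)`, i.e. to the series `a + t` where `t` stands
for `x - a`. -/
structure EmbFamily (K F : Type) [Field K] [Field F] [Algebra K F]
    (m : Polynomial (RatFunc K)) (a : F) where
  emb : Fin m.natDegree → (AdjoinRoot m →+* HahnSeries ℚ F)
  emb_injective : Function.Injective emb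
  emb_C : ∀ i (c : K), emb i (toA m (Polynomial.C c)) = HahnSeries.single 0 (algebraMap K F c)
  emb_X : ∀ i, emb i (toA m Polynomial.X) =
    HahnSeries.single 0 a + HahnSeries.single 1 1
  emb_puiseux : ∀ i f, IsPuiseux (emb i f)

/-- The embeddings around `a` are differential homomorphisms: they intertwine the derivation
`D` on `A` with the termwise derivative of series. -/
def IsDiffFamily {K F : Type} [Field K] [Field F] [Algebra K F]
    {m : Polynomial (RatFunc K)} {a : F} (D : AdjoinRoot m → AdjoinRoot m)
    (σ : EmbFamily K F m a) : Prop :=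
  ∀ i f, σ.emb i (D f) = hderiv (σ.emb i f)

/-- `f ∈ A` is locally integral at `a`, i.e. `val_a(f) ≥ 0`: all Puiseux series associated
to `f` around `a` have nonnegative valuation. -/
def LocIntegralAt {K F : Type} [Field K] [Field F] [Algebra K F]
    {m : Polynomial (RatFunc K)} {a : F} (σ : EmbFamily K F m a)
    (f : AdjoinRoot m) : Prop :=
  ∀ i, 0 ≤ hval (σ.emb i f)

/-- `a` is a branch point of `f ∈ A`: one of the Puiseux series associated to `f` around `a`
is ramified. -/
def IsBranchPointOf {K F : Type} [Field K] [Field F] [Algebra K F]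
    {m : Polynomial (RatFunc K)} {a : F} (σ : EmbFamily K F m a)
    (f : AdjoinRoot m) : Prop :=
  ∃ i, Ramified (σ.emb i f)

/-- `f ∈ A` is (globally) integral: locally integral at every point `a` of the algebraic
closure of `K` (given the system `σ` of Puiseux expansions around each point). -/
def IntegralElem {K : Type} [Field K] {m : Polynomial (RatFunc K)}
    (σ : ∀ a : AlgebraicClosure K, EmbFamily K (AlgebraicClosure K) m a)
    (f : AdjoinRoot m) : Prop :=
  ∀ a, LocIntegralAt (σ a) f

/-- `W` is an integral basis of `A`: a `K(x)`-vector-space basis consisting of integral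
elements such that every integral element is a `K[x]`-linear combination of `W`. -/
def IsIntegralBasis {K : Type} [Field K] {m : Polynomial (RatFunc K)}
    (σ : ∀ a : AlgebraicClosure K, EmbFamily K (AlgebraicClosure K) m a)
    (W : Fin m.natDegree → AdjoinRoot m) : Prop :=
  IsKxBasis W ∧ (∀ i, IntegralElem σ (W i)) ∧
    ∀ f, IntegralElem σ f → ∃ c : Fin m.natDegree → Polynomial K,
      f = ∑ i, toA m (c i) * W i

/-- The rational function `r ∈ K(x)` has no pole at `a`: `r = p/q` with `q(a) ≠ 0`. -/
def NoPoleAt {K F : Type} [Field K] [Field F] [Algebra K F] (a : F) (r : RatFunc K) : Prop :=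
  ∃ p q : Polynomial K, Polynomial.aeval a q ≠ 0 ∧
    r * algebraMap (Polynomial K) (RatFunc K) q = algebraMap (Polynomial K) (RatFunc K) p

/-- `W` is a local integral basis of `A` at `a`: a `K(x)`-vector-space basis consisting of
elements that are locally integral at `a`, such that every element of `A` that is locally
integral at `a` is a linear combination of `W` with coefficients in `K(x)_a` (rational
functions without a pole at `a`). -/
def IsLocalIntegralBasisAt {K F : Type} [Field K] [Field F] [Algebra K F]
    {m : Polynomial (RatFunc K)} {a : F} (σ : EmbFamily K F m a)
    (W : Fin m.natDegree → AdjoinRoot m) : Prop :=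
  IsKxBasis W ∧ (∀ i, LocIntegralAt σ (W i)) ∧
    ∀ f, LocIntegralAt σ f → ∃ c : Fin m.natDegree → RatFunc K,
      (∀ i, NoPoleAt a (c i)) ∧ f = ∑ i, algebraMap (RatFunc K) (AdjoinRoot m) (c i) * W i

/-! If `u` is not constant then, since `gcd(q₁,…,qₙ, u) = 1` and `W` is an integral basis,
`g = Σ (q_i/u) ω_i` is not integral: some Puiseux expansion of `g` at some point `a` has
valuation `w < 0`, so the corresponding expansion of `h = g′` has valuation exactly `w - 1`.
On the other hand `e` is squarefree: if `p² ∣ e`, then each `(e/p) ω_i′ = Σ (M_ij/p) ω_j` is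
integral (at a root of `p` the factor `e/p` has valuation `≥ 1` and `ω_i′` has valuation
`≥ -1`), so `p` divides `e` and all `M_ij` and is a unit. Hence `de` is squarefree, all its
expansions have valuation `≤ 1`, and the expansion of `deh = Σ h_i ω_i` has valuation
`≤ w < 0`, contradicting the integrality of the `ω_i`. -/

open HahnSeries (addVal addVal_apply addVal_le_of_coeff_ne_zero coeff_orderTop_ne
  le_orderTop_iff_forall orderTop_single orderTop_single_le)

section SeriesValuation

variable {F : Type} [Field F]

theorem hval_eq_addVal (P : HahnSeries ℚ F) : hval P = addVal ℚ F P := by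
  rw [addVal_apply]
  rfl

theorem coe_le_addVal_iff {P : HahnSeries ℚ F} {c : ℚ} :
    (c : WithTop ℚ) ≤ addVal ℚ F P ↔ ∀ q, P.coeff q ≠ 0 → c ≤ q := by
  rw [addVal_apply, le_orderTop_iff_forall]
  refine forall_congr' fun q => ?_
  rw [WithTop.coe_lt_coe, ← not_le, not_imp_comm]

theorem hderiv_coeff (P : HahnSeries ℚ F) (q : ℚ) :
    (hderiv P).coeff q = ((q + 1 : ℚ) : F) * P.coeff (q + 1) := rfl

theorem neg_one_le_addVal_hderiv {P : HahnSeries ℚ F} (hP : 0 ≤ addVal ℚ F P) :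
    ((-1 : ℚ) : WithTop ℚ) ≤ addVal ℚ F (hderiv P) := by
  rw [coe_le_addVal_iff]
  intro q hq
  have := (coe_le_addVal_iff (c := 0)).mp hP (q + 1) (right_ne_zero_of_mul hq)
  linarith

theorem addVal_hderiv [CharZero F] {P : HahnSeries ℚ F} {w : ℚ} (hP : addVal ℚ F P = w)
    (hw : w ≠ 0) : addVal ℚ F (hderiv P) = ((w - 1 : ℚ) : WithTop ℚ) := by
  apply le_antisymm
  · apply addVal_le_of_coeff_ne_zero
    rw [hderiv_coeff, sub_add_cancel]
    exact mul_ne_zero (by exact_mod_cast hw) (coeff_orderTop_ne (by rwa [addVal_apply] at hP))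
  · rw [coe_le_addVal_iff]
    intro q hq
    have := coe_le_addVal_iff.mp hP.ge (q + 1) (right_ne_zero_of_mul hq)
    linarith

/-- Polynomials in `x` as series in `t = x - a`, i.e. substituting `x = a + t`. -/
def evalAround (a : F) : F[X] →+* HahnSeries ℚ F :=
  eval₂RingHom HahnSeries.C (HahnSeries.single 0 a + HahnSeries.single 1 1)

variable (a : F)

theorem evalAround_C (c : F) : evalAround a (C c) = HahnSeries.single 0 c := by
  rw [evalAround, coe_eval₂RingHom, eval₂_C, HahnSeries.C_apply]

theorem evalAround_X_sub_C : evalAround a (X - C a) = HahnSeries.single 1 1 := by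
  rw [map_sub, evalAround_C, evalAround, coe_eval₂RingHom, eval₂_X, add_sub_cancel_left]

theorem addVal_evalAround_nonneg (f : F[X]) : 0 ≤ addVal ℚ F (evalAround a f) := by
  have hC (c : F) : 0 ≤ addVal ℚ F (HahnSeries.single 0 c) := by
    rw [addVal_apply]
    exact orderTop_single_le
  induction f using Polynomial.induction_on' with
  | add f g hf hg => simpa only [map_add] using AddValuation.map_le_add _ hf hg
  | monomial n c =>
    rw [← C_mul_X_pow_eq_monomial, map_mul, map_pow, AddValuation.map_mul, AddValuation.map_pow,
      evalAround_C]
    refine add_nonneg (hC c) (nsmul_nonneg ?_ n)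
    rw [← sub_add_cancel X (C a), map_add, evalAround_X_sub_C, evalAround_C]
    refine AddValuation.map_le_add _ ?_ (hC a)
    rw [addVal_apply, orderTop_single one_ne_zero]
    exact zero_le_one

theorem addVal_evalAround_X_sub_C_mul (g : F[X]) :
    addVal ℚ F (evalAround a ((X - C a) * g)) = 1 + addVal ℚ F (evalAround a g) := by
  rw [map_mul, AddValuation.map_mul, evalAround_X_sub_C, addVal_apply,
    orderTop_single one_ne_zero, WithTop.coe_one]

theorem addVal_evalAround_of_eval_ne_zero {f : F[X]} (hf : f.eval a ≠ 0) :
    addVal ℚ F (evalAround a f) = 0 := by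
  have hC : addVal ℚ F (evalAround a (C (f.eval a))) = 0 := by
    rw [evalAround_C, addVal_apply, orderTop_single hf, WithTop.coe_zero]
  rw [← modByMonic_add_div f (X - C a), modByMonic_X_sub_C_eq_C_eval, map_add,
    AddValuation.map_add_eq_of_lt_left, hC]
  rw [hC, addVal_evalAround_X_sub_C_mul]
  exact zero_lt_one.trans_le (le_add_of_nonneg_right (addVal_evalAround_nonneg a _))

theorem one_le_addVal_evalAround {f : F[X]} (hf : f.eval a = 0) :
    1 ≤ addVal ℚ F (evalAround a f) := by
  rw [← mul_divByMonic_eq_iff_isRoot.mpr hf, addVal_evalAround_X_sub_C_mul]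
  exact le_add_of_nonneg_right (addVal_evalAround_nonneg a _)

theorem addVal_evalAround_le_one {f : F[X]} (hf : f.Separable) :
    addVal ℚ F (evalAround a f) ≤ 1 := by
  by_cases hfa : f.eval a = 0
  · have hg := mul_divByMonic_eq_iff_isRoot.mpr hfa
    have hga : (f /ₘ (X - C a)).eval a ≠ 0 := by
      have := hf.aeval_derivative_ne_zero (x := a) (by simpa using hfa)
      rw [← hg, derivative_mul] at this
      simpa using this
    rw [← hg, addVal_evalAround_X_sub_C_mul, addVal_evalAround_of_eval_ne_zero a hga, add_zero]
  · rw [addVal_evalAround_of_eval_ne_zero a hfa]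
    exact zero_le_one

end SeriesValuation

section FunctionField

variable {K : Type} [Field K] {m : Polynomial (RatFunc K)}

theorem toA_mul (f g : K[X]) : toA m (f * g) = toA m f * toA m g := by
  simp only [toA, map_mul]

theorem toA_ne_zero [Fact (Irreducible m)] {f : K[X]} (hf : f ≠ 0) : toA m f ≠ 0 :=
  (_root_.map_ne_zero _).mpr
    ((map_ne_zero_iff _ (IsFractionRing.injective K[X] (RatFunc K))).mpr hf)

theorem eq_of_sum_toA_mul_eq {ι : Type*} [Fintype ι] {W : ι → AdjoinRoot m}
    (hW : LinearIndependent (RatFunc K) W) {α β : ι → K[X]}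
    (h : ∑ i, toA m (α i) * W i = ∑ i, toA m (β i) * W i) : α = β := by
  funext i
  apply IsFractionRing.injective K[X] (RatFunc K)
  exact Fintype.linearIndependent_iffₛ.mp hW _ _ (by simpa only [Algebra.smul_def, toA] using h) i

variable {F : Type} [Field F] [Algebra K F] {a : F}

theorem EmbFamily.emb_toA (σa : EmbFamily K F m a) (i : Fin m.natDegree) (f : K[X]) :
    σa.emb i (toA m f) = evalAround a (f.map (algebraMap K F)) := by
  have : (σa.emb i).comp ((algebraMap (RatFunc K) (AdjoinRoot m)).comp
      (algebraMap K[X] (RatFunc K))) = (evalAround a).comp (mapRingHom (algebraMap K F)) := by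
    refine Polynomial.ringHom_ext (fun c => ?_) ?_
    · simp only [RingHom.comp_apply, coe_mapRingHom, Polynomial.map_C, evalAround_C]
      exact σa.emb_C i c
    · simp only [RingHom.comp_apply, coe_mapRingHom, Polynomial.map_X, evalAround,
        coe_eval₂RingHom, eval₂_X]
      exact σa.emb_X i
  exact DFunLike.congr_fun this f

variable (σa : EmbFamily K F m a) (i : Fin m.natDegree)

theorem EmbFamily.addVal_emb_toA_nonneg (f : K[X]) : 0 ≤ addVal ℚ F (σa.emb i (toA m f)) := by
  rw [σa.emb_toA]
  exact addVal_evalAround_nonneg a _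

theorem EmbFamily.addVal_emb_toA_of_aeval_ne_zero {f : K[X]} (hf : aeval a f ≠ 0) :
    addVal ℚ F (σa.emb i (toA m f)) = 0 := by
  rw [σa.emb_toA]
  exact addVal_evalAround_of_eval_ne_zero a (by rwa [eval_map_algebraMap])

theorem EmbFamily.one_le_addVal_emb_toA {f : K[X]} (hf : aeval a f = 0) :
    1 ≤ addVal ℚ F (σa.emb i (toA m f)) := by
  rw [σa.emb_toA]
  exact one_le_addVal_evalAround a (by rwa [eval_map_algebraMap])

theorem EmbFamily.addVal_emb_toA_le_one [CharZero K] {f : K[X]} (hf : Squarefree f) :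
    addVal ℚ F (σa.emb i (toA m f)) ≤ 1 := by
  rw [σa.emb_toA]
  exact addVal_evalAround_le_one a (PerfectField.separable_iff_squarefree.mpr hf).map

end FunctionField

section IntegralElements

variable {K : Type} [Field K] {m : Polynomial (RatFunc K)}
  {σ : ∀ a : AlgebraicClosure K, EmbFamily K (AlgebraicClosure K) m a}

theorem locIntegralAt_iff {F : Type} [Field F] [Algebra K F] {a : F} {σa : EmbFamily K F m a}
    {f : AdjoinRoot m} : LocIntegralAt σa f ↔ ∀ i, 0 ≤ addVal ℚ F (σa.emb i f) := by
  simp only [LocIntegralAt, hval_eq_addVal]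

theorem integralElem_sum_toA_mul {W : Fin m.natDegree → AdjoinRoot m}
    (hW : ∀ i, IntegralElem σ (W i)) (c : Fin m.natDegree → K[X]) :
    IntegralElem σ (∑ i, toA m (c i) * W i) := by
  intro a
  rw [locIntegralAt_iff]
  intro ι
  rw [map_sum]
  refine AddValuation.map_le_sum _ fun j _ => ?_
  rw [map_mul, AddValuation.map_mul]
  exact add_nonneg ((σ a).addVal_emb_toA_nonneg ι (c j)) (locIntegralAt_iff.mp (hW j a) ι)

theorem integralElem_of_toA_mul {p : K[X]} {f : AdjoinRoot m}
    (hpf : IntegralElem σ (toA m p * f)) (hroot : ∀ a, aeval a p = 0 → LocIntegralAt (σ a) f) :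
    IntegralElem σ f := by
  intro a
  by_cases hpa : aeval a p = 0
  · exact hroot a hpa
  rw [locIntegralAt_iff]
  intro ι
  have := locIntegralAt_iff.mp (hpf a) ι
  rwa [map_mul, AddValuation.map_mul, (σ a).addVal_emb_toA_of_aeval_ne_zero ι hpa,
    zero_add] at this

theorem IsIntegralBasis.dvd_coeff {W : Fin m.natDegree → AdjoinRoot m}
    (hW : IsIntegralBasis σ W) {f : AdjoinRoot m} (hf : IntegralElem σ f) {p : K[X]}
    {c : Fin m.natDegree → K[X]} (h : toA m p * f = ∑ i, toA m (c i) * W i) (i : Fin m.natDegree) :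
    p ∣ c i := by
  obtain ⟨b, rfl⟩ := hW.2.2 f hf
  have hc : (fun j => p * b j) = c := by
    refine eq_of_sum_toA_mul_eq hW.1.1 ?_
    rw [← h, Finset.mul_sum]
    simp only [toA_mul, mul_assoc]
  exact ⟨b i, (congrFun hc i).symm⟩

theorem IsIntegralBasis.squarefree_of_derivRel {W : Fin m.natDegree → AdjoinRoot m}
    (hW : IsIntegralBasis σ W) {D : AdjoinRoot m → AdjoinRoot m} (hσ : ∀ a, IsDiffFamily D (σ a))
    {e : K[X]} {M : Matrix (Fin m.natDegree) (Fin m.natDegree) K[X]} (hrel : DerivRel D W e M)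
    (hgcd : GcdOne e M) : Squarefree e := by
  rintro p ⟨e₂, he⟩
  refine hgcd p ⟨p * e₂, by rw [he, mul_assoc]⟩ fun i j => ?_
  have hψ : toA m p * (toA m (p * e₂) * D (W i)) = ∑ j, toA m (M i j) * W j := by
    rw [← mul_assoc, ← toA_mul, ← mul_assoc, ← he, hrel i]
  refine hW.dvd_coeff (integralElem_of_toA_mul (hψ ▸ integralElem_sum_toA_mul hW.2.1 _) ?_) hψ j
  intro a hpa
  rw [locIntegralAt_iff]
  intro ι
  rw [map_mul, AddValuation.map_mul, hσ a ι]
  have h₁ := (σ a).one_le_addVal_emb_toA ι (f := p * e₂) (by rw [map_mul, hpa, zero_mul])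
  have h₂ := neg_one_le_addVal_hderiv (locIntegralAt_iff.mp (hW.2.1 i a) ι)
  have h0 : (0 : WithTop ℚ) = 1 + ((-1 : ℚ) : WithTop ℚ) := by norm_cast
  exact h0.trans_le (add_le_add h₁ h₂)

end IntegralElements

theorem u_is_constant_for_integral_basis_general {K : Type} [Field K] [CharZero K]
    (m : Polynomial (RatFunc K)) [Fact (Irreducible m)]
    (D : AdjoinRoot m → AdjoinRoot m)
    (σ : ∀ a : AlgebraicClosure K, EmbFamily K (AlgebraicClosure K) m a)
    (hσ : ∀ a, IsDiffFamily D (σ a))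
    (W : Fin m.natDegree → AdjoinRoot m)
    (e : Polynomial K) (M : Matrix (Fin m.natDegree) (Fin m.natDegree) (Polynomial K))
    -- `W` is an integral basis with `eW′ = MW`:
    (hW : IsIntegralBasis σ W) (hrel : DerivRel D W e M) (hgcd : GcdOne e M)
    (h : AdjoinRoot m) (hc : Fin m.natDegree → Polynomial K) (d : Polynomial K)
    -- `h = Σ (h_i/(de)) ω_i`:
    (hrep : toA m d * toA m e * h = ∑ i, toA m (hc i) * W i)
    (hde : IsCoprime d e)
    (hdsqf : Squarefree d)
    -- `h = (Σ (q_i/u) ω_i)′` with `gcd(q₁,…,qₙ, u) = 1`: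
    (u : Polynomial K) (q : Fin m.natDegree → Polynomial K) (hu0 : u ≠ 0)
    (hint : h = D (∑ i, toA m (q i) / toA m u * W i))
    (hqu : ∀ p : Polynomial K, p ∣ u → (∀ i, p ∣ q i) → IsUnit p) :
    ∃ c : K, u = Polynomial.C c := by
  by_contra hconst
  have hu : ¬ IsUnit u := by
    rintro hu
    obtain ⟨c, -, hc⟩ := Polynomial.isUnit_iff.mp hu
    exact hconst ⟨c, hc.symm⟩
  set g := ∑ i, toA m (q i) / toA m u * W i
  have hug : toA m u * g = ∑ i, toA m (q i) * W i := by
    simp only [g, Finset.mul_sum, ← mul_assoc, mul_div_cancel₀ _ (toA_ne_zero (m := m) hu0)]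
  have hg : ¬ IntegralElem σ g := fun hg => hu (hqu u dvd_rfl (hW.dvd_coeff hg hug))
  obtain ⟨a, ι, hneg⟩ : ∃ a ι, addVal ℚ _ ((σ a).emb ι g) < 0 := by
    simpa only [IntegralElem, locIntegralAt_iff, not_forall, not_le] using hg
  obtain ⟨w, hw⟩ := WithTop.ne_top_iff_exists.mp (ne_top_of_lt hneg)
  have hw0 : w < 0 := by exact_mod_cast hw ▸ hneg
  have hh : addVal ℚ _ ((σ a).emb ι h) = ((w - 1 : ℚ) : WithTop ℚ) := by
    rw [hint, hσ a ι, addVal_hderiv hw.symm hw0.ne]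
  have hde_le : addVal ℚ _ ((σ a).emb ι (toA m (d * e))) ≤ 1 :=
    (σ a).addVal_emb_toA_le_one ι (squarefree_mul_iff.mpr
      ⟨hde.isRelPrime, hdsqf, hW.squarefree_of_derivRel hσ hrel hgcd⟩)
  have hrep_nonneg := locIntegralAt_iff.mp (integralElem_sum_toA_mul hW.2.1 hc a) ι
  rw [← hrep, ← toA_mul, map_mul, AddValuation.map_mul, hh] at hrep_nonneg
  obtain ⟨t, ht⟩ := WithTop.ne_top_iff_exists.mp (ne_top_of_le_ne_top WithTop.coe_ne_top hde_le)
  rw [← ht] at hde_le hrep_nonneg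
  have ht1 : t ≤ 1 := by exact_mod_cast hde_le
  have : 0 ≤ t + (w - 1) := by exact_mod_cast hrep_nonneg
  linarith

/-- Let `W = (ω₁,…,ωₙ)` be an integral basis of `A` with `eW′ = MW`, and let
`h = Σ (h_i/(de)) ω_i` with `gcd(d, e) = 1`, `gcd(h₁,…,hₙ, d) = 1`, and `d` squarefree.
If `h = (Σ (q_i/u) ω_i)′` with `gcd(q₁,…,qₙ, u) = 1`, then `u` is a constant in `K`. -/
theorem u_is_constant_for_integral_basis {K : Type} [Field K] [CharZero K]
    (m : Polynomial (RatFunc K)) [Fact (Irreducible m)]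
    (D : AdjoinRoot m → AdjoinRoot m) (hD : IsDerivationOnA m D)
    (σ : ∀ a : AlgebraicClosure K, EmbFamily K (AlgebraicClosure K) m a)
    (hσ : ∀ a, IsDiffFamily D (σ a))
    (W : Fin m.natDegree → AdjoinRoot m)
    (e : Polynomial K) (M : Matrix (Fin m.natDegree) (Fin m.natDegree) (Polynomial K))
    -- `W` is an integral basis with `eW′ = MW`:
    (hW : IsIntegralBasis σ W) (hrel : DerivRel D W e M) (hgcd : GcdOne e M)
    (h : AdjoinRoot m) (hc : Fin m.natDegree → Polynomial K) (d : Polynomial K)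
    (hd0 : d ≠ 0) (he0 : e ≠ 0)
    -- `h = Σ (h_i/(de)) ω_i`:
    (hrep : toA m d * toA m e * h = ∑ i, toA m (hc i) * W i)
    (hde : IsCoprime d e)
    (hhd : ∀ p : Polynomial K, p ∣ d → (∀ i, p ∣ hc i) → IsUnit p)
    (hdsqf : Squarefree d)
    -- `h = (Σ (q_i/u) ω_i)′` with `gcd(q₁,…,qₙ, u) = 1`:
    (u : Polynomial K) (q : Fin m.natDegree → Polynomial K) (hu0 : u ≠ 0)
    (hint : h = D (∑ i, toA m (q i) / toA m u * W i))
    (hqu : ∀ p : Polynomial K, p ∣ u → (∀ i, p ∣ q i) → IsUnit p) :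
    ∃ c : K, u = Polynomial.C c :=
  u_is_constant_for_integral_basis_general m D σ hσ W e M hW hrel hgcd h hc d hrep hde hdsqf u q hu0
    hint hqu
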